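/- arXiv:2501.06930 — 2 statements merged into one kernel-verified Lean document; each statement's English description precedes it below -/
import Mathlib

section
/- Let (𝒜_γ)_{γ∈Γ} be a family of random variables with values in K_+(Π). Then the following equivalences hold. (a) [for all T, ε > 0: lim_{δ→0} sup_{γ∈Γ} P[sup_{π∈𝒜_γ} m_{T,δ}(π) > ε] = 0] holds if and only if [for all T, η > 0: lim_{δ→0} sup_{γ∈Γ} P[𝒜_γ ∩ T²_{T,δ,η} ≠ ∅] = 0]. (b) [for all T, ε > 0: lim_{δ→0} sup_{γ∈Γ} P[sup_{π∈𝒜_γ} m^J_{T,δ}(π) ≥ ε] = 0] holds if and only if [for all T, η > 0: lim_{δ→0} sup_{γ∈Γ} P[𝒜_γ ∩ (T^J_{T,δ,η} ∪ T^M_{T,δ,η}) ≠ ∅] = 0]. (c) [for all T, ε > 0: lim_{δ→0} sup_{γ∈Γ} P[sup_{π∈𝒜_γ} m^M_{T,δ}(π) ≥ ε] = 0] holds if and only if [for all T, η > 0: lim_{δ→0} sup_{γ∈Γ} P[𝒜_γ ∩ T^M_{T,δ,η} ≠ ∅] = 0]. -/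
noncomputable section

open Set Filter Topology MeasureTheory

namespace PathsPaper

/-- `tanh` extended to `EReal`, with `tanh (±∞) := ±1`. -/
def etanh (x : EReal) : ℝ :=
  if x = ⊤ then 1 else if x = ⊥ then -1 else Real.tanh x.toReal

/-- The squeezed space `ℝ²_c = (ℝ̄ × ℝ) ∪ {(∗,−∞), (∗,+∞)}`; here `Sum.inr false`
represents `(∗,−∞)` and `Sum.inr true` represents `(∗,+∞)`. -/
abbrev Rsq := (EReal × ℝ) ⊕ Bool

/-- The embedding `Θ` of the squeezed space into `ℝ²`. -/
def theta : Rsq → ℝ × ℝ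
  | Sum.inl p => (etanh p.1 / (1 + |p.2|), Real.tanh p.2)
  | Sum.inr b => (0, if b then 1 else -1)

/-- The metric `d_sqz` on the squeezed space (Euclidean distance of the `Θ`-images). -/
def dSqz (z z' : Rsq) : ℝ :=
  Real.sqrt (((theta z).1 - (theta z').1) ^ 2 + ((theta z).2 - (theta z').2) ^ 2)

/-- A path: a closed time domain `I ⊆ ℝ` together with a left value function `l = π(·−)`
and a right value function `r = π(·+)` with values in `ℝ̄ = EReal`, such that `r` is
right-continuous along `I`, `l` is left-continuous along `I`, `l t = lim_{s↑t, s∈I} r s`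
whenever `t` is a left accumulation point of `I`, and `r t = lim_{s↓t, s∈I} l s` whenever
`t` is a right accumulation point of `I`.  (The values outside `I` are normalised to `0`
so that a path is determined by its values on `I`.) -/
structure PathSp where
  I : Set ℝ
  closed_I : IsClosed I
  l : ℝ → EReal
  r : ℝ → EReal
  l_default : ∀ t, t ∉ I → l t = 0
  r_default : ∀ t, t ∉ I → r t = 0
  right_cont : ∀ t ∈ I, Tendsto r (𝓝[I ∩ Ioi t] t) (𝓝 (r t))
  left_cont : ∀ t ∈ I, Tendsto l (𝓝[I ∩ Iio t] t) (𝓝 (l t))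
  left_lim : ∀ t ∈ I, Tendsto r (𝓝[I ∩ Iio t] t) (𝓝 (l t))
  right_lim : ∀ t ∈ I, Tendsto l (𝓝[I ∩ Ioi t] t) (𝓝 (r t))

/-- The closed graph of a path, a subset of `S = ℝ̄ × ℝ`. -/
def graph (π : PathSp) : Set (EReal × ℝ) :=
  {p | p.2 ∈ π.I ∧ (p.1 = π.l p.2 ∨ p.1 = π.r p.2)}

/-- The filled graph of a path. -/
def fgraph (π : PathSp) : Set (EReal × ℝ) :=
  {p | p.2 ∈ π.I ∧ p.1 ∈ uIcc (π.l p.2) (π.r p.2)}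

/-- The strict total order `≺` on the (filled) graph of `π`: `(x,s) ≺ (y,t)` iff `s < t`,
or `s = t` and `x ≠ y` and `x` lies between `π(t−)` and `y`. -/
def gLt (π : PathSp) (p q : EReal × ℝ) : Prop :=
  p.2 < q.2 ∨ (p.2 = q.2 ∧ p.1 ≠ q.1 ∧ p.1 ∈ uIcc (π.l q.2) q.1)

/-- The total order `⪯` on the (filled) graph of `π`. -/
def gLe (π : PathSp) (p q : EReal × ℝ) : Prop := p = q ∨ gLt π p q

/-- `π∗` (resp. `π̄∗`): a graph together with the two points at infinity of the squeezed
space. -/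
def starSet (G : Set (EReal × ℝ)) : Set Rsq :=
  (Sum.inl '' G) ∪ {Sum.inr false, Sum.inr true}

/-- The order `≺` extended to the squeezed space, `(∗,−∞)` minimal, `(∗,+∞)` maximal. -/
def sLt (π : PathSp) : Rsq → Rsq → Prop
  | Sum.inl p, Sum.inl q => gLt π p q
  | Sum.inl _, Sum.inr b => b = true
  | Sum.inr b, Sum.inl _ => b = false
  | Sum.inr b, Sum.inr b' => b = false ∧ b' = true

/-- `C` is a correspondence between `A` and `B`. -/
def IsCorr (A B : Set Rsq) (C : Set (Rsq × Rsq)) : Prop :=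
  C ⊆ A ×ˢ B ∧ (∀ a ∈ A, ∃ b ∈ B, (a, b) ∈ C) ∧ (∀ b ∈ B, ∃ a ∈ A, (a, b) ∈ C)

/-- A correspondence is monotone if it contains no pair of order-violating elements. -/
def IsMono (π₁ π₂ : PathSp) (C : Set (Rsq × Rsq)) : Prop :=
  ¬ ∃ z ∈ C, ∃ z' ∈ C, sLt π₁ z.1 z'.1 ∧ sLt π₂ z'.2 z.2

def corrSup (C : Set (Rsq × Rsq)) : ℝ := sSup ((fun z : Rsq × Rsq => dSqz z.1 z.2) '' C)

/-- The Skorohod J1 metric on the path space. -/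
def dJ1 (π₁ π₂ : PathSp) : ℝ :=
  sInf {h | ∃ C, IsCorr (starSet (graph π₁)) (starSet (graph π₂)) C ∧ IsMono π₁ π₂ C ∧
    h = corrSup C}

/-- The Skorohod M1 metric on the path space. -/
def dM1 (π₁ π₂ : PathSp) : ℝ :=
  sInf {h | ∃ C, IsCorr (starSet (fgraph π₁)) (starSet (fgraph π₂)) C ∧ IsMono π₁ π₂ C ∧
    h = corrSup C}

/-- The topology generated by the open balls of a distance function (for a metric, this
is the metric topology). -/
def ballTop {X : Type*} (d : X → X → ℝ) : TopologicalSpace X :=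
  TopologicalSpace.generateFrom {U | ∃ x ε, 0 < ε ∧ U = {y | d x y < ε}}

/-- The J1 topology on the path space. -/
def J1Top : TopologicalSpace PathSp := ballTop dJ1

/-- The M1 topology on the path space. -/
def M1Top : TopologicalSpace PathSp := ballTop dM1

/-- Convergence of a sequence of paths in the J1 topology. -/
def J1Conv (πn : ℕ → PathSp) (π : PathSp) : Prop :=
  Tendsto (fun n => dJ1 (πn n) π) atTop (𝓝 0)

/-- Convergence of a sequence of paths in the M1 topology. -/
def M1Conv (πn : ℕ → PathSp) (π : PathSp) : Prop :=
  Tendsto (fun n => dM1 (πn n) π) atTop (𝓝 0)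

/-- The Hausdorff distance between two sets associated with a distance function `d`. -/
def hausDist {X : Type*} (d : X → X → ℝ) (A B : Set X) : ℝ :=
  max (sSup ((fun a => sInf ((fun b => d a b) '' B)) '' A))
      (sSup ((fun b => sInf ((fun a => d a b) '' A)) '' B))

/-- `K_+(X)`: the nonempty compact subsets of a topological space. -/
def KP {X : Type*} (τ : TopologicalSpace X) : Type _ :=
  {A : Set X // @IsCompact X τ A ∧ A.Nonempty}

/-- The Hausdorff topology on `K_+(X)`, from a metric `d` generating `τ`. -/
def KPtop {X : Type*} (τ : TopologicalSpace X) (d : X → X → ℝ) : TopologicalSpace (KP τ) :=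
  ballTop (fun A B => hausDist d A.1 B.1)

/-- Tightness of the laws of a family of random variables `A γ` with values in a space `K`
equipped with a topology `τK`: for every `ε > 0` there is a compact `C ⊆ K` whose
complement has probability at most `ε` for every `γ`. -/
def Tight {Γ : Type*} {K : Type*} (τK : TopologicalSpace K)
    {Ω : Γ → Type*} [∀ γ, MeasurableSpace (Ω γ)]
    (P : ∀ γ, Measure (Ω γ)) (A : ∀ γ, Ω γ → K) : Prop :=
  ∀ ε : ℝ, 0 < ε → ∃ C : Set K, @IsCompact K τK C ∧
    ∀ γ, P γ {ω | A γ ω ∉ C} ≤ ENNReal.ofReal ε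

/-- `Δ²_{T,δ}(π)`. -/
def Delta2 (π : PathSp) (T δ : ℝ) : Set (EReal × EReal) :=
  {p | ∃ s t : ℝ, -T ≤ s ∧ s ≤ t ∧ t ≤ T ∧ t - s ≤ δ ∧
    (p.1, s) ∈ graph π ∧ (p.2, t) ∈ graph π ∧ gLe π (p.1, s) (p.2, t)}

/-- `Δ³_{T,δ}(π)`. -/
def Delta3 (π : PathSp) (T δ : ℝ) : Set (EReal × EReal × EReal) :=
  {p | ∃ s t u : ℝ, -T ≤ s ∧ s ≤ t ∧ t ≤ u ∧ u ≤ T ∧ u - s ≤ δ ∧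
    (p.1, s) ∈ graph π ∧ (p.2.1, t) ∈ graph π ∧ (p.2.2, u) ∈ graph π ∧
    gLe π (p.1, s) (p.2.1, t) ∧ gLe π (p.2.1, t) (p.2.2, u)}

/-- `S⁺_{T,δ,ε,r}`. -/
def Splus (T δ ε r : ℝ) : Set PathSp :=
  {π | ∃ x y : EReal, (x, y) ∈ Delta2 π T δ ∧ x ≤ (r : EReal) ∧ ((r + ε : ℝ) : EReal) ≤ y}

/-- `S⁻_{T,δ,ε,r}`. -/
def Sminus (T δ ε r : ℝ) : Set PathSp :=
  {π | ∃ x y : EReal, (x, y) ∈ Delta2 π T δ ∧ y ≤ (r : EReal) ∧ ((r + ε : ℝ) : EReal) ≤ x}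

/-- `S²_{T,δ,ε,r}`. -/
def S2 (T δ ε r : ℝ) : Set PathSp := Splus T δ ε r ∪ Sminus T δ ε r

/-- `S^{+−}_{T,δ,ε,r}`. -/
def Spm (T δ ε r : ℝ) : Set PathSp :=
  {π | ∃ x y z : EReal, (x, y, z) ∈ Delta3 π T δ ∧
    x ≤ (r : EReal) ∧ z ≤ (r : EReal) ∧ ((r + ε : ℝ) : EReal) ≤ y}

/-- `S^{−+}_{T,δ,ε,r}`. -/
def Smp (T δ ε r : ℝ) : Set PathSp :=
  {π | ∃ x y z : EReal, (x, y, z) ∈ Delta3 π T δ ∧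
    y ≤ (r : EReal) ∧ ((r + ε : ℝ) : EReal) ≤ x ∧ ((r + ε : ℝ) : EReal) ≤ z}

/-- `S^{++}_{T,δ,ε,r}`. -/
def Spp (T δ ε r : ℝ) : Set PathSp :=
  {π | ∃ x y z : EReal, (x, y, z) ∈ Delta3 π T δ ∧
    x ≤ (r : EReal) ∧ ((r + ε : ℝ) : EReal) ≤ y ∧ y ≤ ((r + 2 * ε : ℝ) : EReal) ∧
    ((r + 3 * ε : ℝ) : EReal) ≤ z}

/-- `S^{−−}_{T,δ,ε,r}`. -/
def Smm (T δ ε r : ℝ) : Set PathSp :=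
  {π | ∃ x y z : EReal, (x, y, z) ∈ Delta3 π T δ ∧
    z ≤ (r : EReal) ∧ ((r + ε : ℝ) : EReal) ≤ y ∧ y ≤ ((r + 2 * ε : ℝ) : EReal) ∧
    ((r + 3 * ε : ℝ) : EReal) ≤ x}

/-- `S^J_{T,δ,ε,r}`. -/
def SJ (T δ ε r : ℝ) : Set PathSp := Spp T δ ε r ∪ Smm T δ ε r

/-- `S^M_{T,δ,ε,r}`. -/
def SM (T δ ε r : ℝ) : Set PathSp := Spm T δ ε r ∪ Smp T δ ε r

/-- `Δ²_{T,δ}(π₁,π₂)` for a pair of paths. -/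
def Delta2Pair (π₁ π₂ : PathSp) (T δ : ℝ) : Set (EReal × EReal × EReal × EReal) :=
  {q | ∃ s₁ t₁ s₂ t₂ : ℝ,
    -T ≤ s₁ ∧ s₁ ≤ t₁ ∧ t₁ ≤ T ∧ -T ≤ s₂ ∧ s₂ ≤ t₂ ∧ t₂ ≤ T ∧
    (q.1, s₁) ∈ graph π₁ ∧ (q.2.1, t₁) ∈ graph π₁ ∧ gLe π₁ (q.1, s₁) (q.2.1, t₁) ∧
    (q.2.2.1, s₂) ∈ graph π₂ ∧ (q.2.2.2, t₂) ∈ graph π₂ ∧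
    gLe π₂ (q.2.2.1, s₂) (q.2.2.2, t₂) ∧
    max t₁ t₂ - min s₁ s₂ ≤ δ}

/-- `C^M_{T,δ,ε,r}`. -/
def CM (T δ ε r : ℝ) : Set (PathSp × PathSp) :=
  {pp | ∃ x₁ y₁ x₂ y₂ : EReal, (x₁, y₁, x₂, y₂) ∈ Delta2Pair pp.1 pp.2 T δ ∧
    x₁ ≤ (r : EReal) ∧ y₂ ≤ (r : EReal) ∧
    ((r + ε : ℝ) : EReal) ≤ y₁ ∧ ((r + ε : ℝ) : EReal) ≤ x₂}

/-- `φ(x) = x/√(1+x²)` extended to `ℝ̄`. -/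
def phiR (x : EReal) : ℝ :=
  if x = ⊤ then 1 else if x = ⊥ then -1 else x.toReal / Real.sqrt (1 + x.toReal ^ 2)

/-- The metric `d_ℝ̄` on `ℝ̄`. -/
def dR (x y : EReal) : ℝ := |phiR x - phiR y|

/-- The modulus of continuity `m_{T,δ}(π)`. -/
def modC (π : PathSp) (T δ : ℝ) : ℝ :=
  sSup {h | ∃ x y : EReal, (x, y) ∈ Delta2 π T δ ∧ h = dR x y}

/-- The modulus `m^J_{T,δ}(π)`. -/
def modJ (π : PathSp) (T δ : ℝ) : ℝ :=
  sSup {h | ∃ x y z : EReal, (x, y, z) ∈ Delta3 π T δ ∧ h = min (dR y x) (dR y z)}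

/-- The modulus `m^M_{T,δ}(π)`. -/
def modM (π : PathSp) (T δ : ℝ) : ℝ :=
  sSup {h | ∃ x y z : EReal, (x, y, z) ∈ Delta3 π T δ ∧
    h = sInf ((fun w => dR y w) '' uIcc x z)}

/-- `T²_{T,δ,η}`. -/
def T2set (T δ η : ℝ) : Set PathSp :=
  {π | ∃ x y : EReal, (x, y) ∈ Delta2 π T δ ∧ dR x y > η}

/-- `T⁺_{T,δ,η}`. -/
def Tplus (T δ η : ℝ) : Set PathSp :=
  {π | ∃ x y : EReal, (x, y) ∈ Delta2 π T δ ∧ x < y ∧ dR x y > η}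

/-- `T⁻_{T,δ,η}`. -/
def Tminus (T δ η : ℝ) : Set PathSp :=
  {π | ∃ x y : EReal, (x, y) ∈ Delta2 π T δ ∧ y < x ∧ dR x y > η}

/-- `T^{++}_{T,δ,η}`. -/
def Tpp (T δ η : ℝ) : Set PathSp :=
  {π | ∃ x y z : EReal, (x, y, z) ∈ Delta3 π T δ ∧ x < y ∧ y < z ∧
    dR x y > η ∧ dR y z > η}

/-- `T^{+−}_{T,δ,η}`. -/
def Tpm (T δ η : ℝ) : Set PathSp :=
  {π | ∃ x y z : EReal, (x, y, z) ∈ Delta3 π T δ ∧ x < y ∧ z < y ∧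
    dR x y > η ∧ dR y z > η}

/-- `T^{−+}_{T,δ,η}`. -/
def Tmp (T δ η : ℝ) : Set PathSp :=
  {π | ∃ x y z : EReal, (x, y, z) ∈ Delta3 π T δ ∧ y < x ∧ y < z ∧
    dR x y > η ∧ dR y z > η}

/-- `T^{−−}_{T,δ,η}`. -/
def Tmm (T δ η : ℝ) : Set PathSp :=
  {π | ∃ x y z : EReal, (x, y, z) ∈ Delta3 π T δ ∧ y < x ∧ z < y ∧
    dR x y > η ∧ dR y z > η}

/-- `T^J_{T,δ,η}`. -/
def TJ (T δ η : ℝ) : Set PathSp := Tpp T δ η ∪ Tmm T δ η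

/-- `T^M_{T,δ,η}`. -/
def TM (T δ η : ℝ) : Set PathSp := Tpm T δ η ∪ Tmp T δ η

/-- A continuous path. -/
def IsContP (π : PathSp) : Prop := ∀ t ∈ π.I, π.l t = π.r t

/-- The space `Π_c` of continuous paths. -/
def PathC : Type := {π : PathSp // IsContP π}

/-- The (J1 = M1) metric on `Π_c`. -/
def dC (π₁ π₂ : PathC) : ℝ := dJ1 π₁.1 π₂.1

/-- The topology on `Π_c`. -/
def CTop : TopologicalSpace PathC := ballTop dC

/-- A connected path: the domain is an interval. -/
def IsConn (π : PathSp) : Prop := π.I.OrdConnected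

/-- A bi-infinite path: the domain is all of `ℝ`. -/
def IsBiInf (π : PathSp) : Prop := π.I = univ

/-- `π'` extends `π`. -/
def ExtendsP (π' π : PathSp) : Prop := fgraph π ⊆ fgraph π'

/-- The relation `π₁ ◁ π₂`. -/
def OrdBelow (π₁ π₂ : PathSp) : Prop :=
  ∃ π₁' π₂' : PathSp, IsBiInf π₁' ∧ IsBiInf π₂' ∧ ExtendsP π₁' π₁ ∧ ExtendsP π₂' π₂ ∧
    ∀ t : ℝ, π₁'.l t ≤ π₂'.l t ∧ π₁'.r t ≤ π₂'.r t

/-- A noncrossing set of paths. -/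
def Noncrossing (A : Set PathSp) : Prop :=
  ∀ π₁ ∈ A, ∀ π₂ ∈ A, OrdBelow π₁ π₂ ∨ OrdBelow π₂ π₁

/-- `π₁` crosses `π₂`. -/
def Crosses (π₁ π₂ : PathSp) : Prop := ¬ OrdBelow π₁ π₂ ∧ ¬ OrdBelow π₂ π₁

/-- `π₁` collides with `π₂` at time `t`: at time `t` the two paths jump over some
interval in opposite directions. -/
def CollidesAt (π₁ π₂ : PathSp) (t : ℝ) : Prop :=
  t ∈ π₁.I ∧ t ∈ π₂.I ∧
  ((π₁.r t < π₁.l t ∧ π₁.r t < π₂.r t ∧ π₂.l t < π₁.l t ∧ π₂.l t < π₂.r t) ∨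
   (π₁.l t < π₁.r t ∧ π₁.l t < π₂.l t ∧ π₂.r t < π₁.r t ∧ π₂.r t < π₂.l t))

/-- `∂I`: the finite boundary points of the domain of `π`. -/
def bdryI (π : PathSp) : Set ℝ := π.I \ interior π.I

/-- `t` is the (finite) minimum of `I`. -/
def IsMinOf (I : Set ℝ) (t : ℝ) : Prop := t ∈ I ∧ ∀ s ∈ I, t ≤ s

/-- `t` is the (finite) maximum of `I`. -/
def IsMaxOf (I : Set ℝ) (t : ℝ) : Prop := t ∈ I ∧ ∀ s ∈ I, s ≤ t

/-- `∂⁻I`, the set of finite lower boundary points. -/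
def bdryMinus (I : Set ℝ) : Set ℝ := {t | IsMinOf I t}

/-- `∂⁺I`, the set of finite upper boundary points. -/
def bdryPlus (I : Set ℝ) : Set ℝ := {t | IsMaxOf I t}

/-- Evaluation of a path at a point `t±` of the split real line; `(t, false)` stands
for `t−` and `(t, true)` for `t+`. -/
def pev (π : PathSp) (tb : ℝ × Bool) : EReal := if tb.2 then π.r tb.1 else π.l tb.1

/-- `I^𝔰_π`: points `t±` with `t ∈ I_π`, excluding `s−` and `u+` where `s, u` are the
initial and final times. -/
def Isplit (π : PathSp) : Set (ℝ × Bool) :=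
  {tb | tb.1 ∈ π.I ∧ ¬ (tb.2 = false ∧ IsMinOf π.I tb.1) ∧ ¬ (tb.2 = true ∧ IsMaxOf π.I tb.1)}

/-- `I^l_π`. -/
def Il (π : PathSp) : Set (ℝ × Bool) :=
  Isplit π ∪ {tb | tb.2 = false ∧ IsMinOf π.I tb.1 ∧ π.r tb.1 < π.l tb.1}
    ∪ {tb | tb.2 = true ∧ IsMaxOf π.I tb.1 ∧ π.l tb.1 < π.r tb.1}

/-- `I^r_π`. -/
def Ir (π : PathSp) : Set (ℝ × Bool) :=
  Isplit π ∪ {tb | tb.2 = false ∧ IsMinOf π.I tb.1 ∧ π.l tb.1 < π.r tb.1}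
    ∪ {tb | tb.2 = true ∧ IsMaxOf π.I tb.1 ∧ π.r tb.1 < π.l tb.1}

/-- `L(π)`. -/
def Lset (π : PathSp) : Set (EReal × ℝ × Bool) := {p | p.2 ∈ Il π ∧ p.1 < pev π p.2}

/-- `R(π)`. -/
def Rset (π : PathSp) : Set (EReal × ℝ × Bool) := {p | p.2 ∈ Ir π ∧ pev π p.2 < p.1}

/-- `L°(π)`. -/
def Lo (π : PathSp) : Set (EReal × ℝ) :=
  {p | p.2 ∈ interior π.I ∧ p.1 < min (π.l p.2) (π.r p.2)}

/-- `L̄(π)`. -/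
def Lbar (π : PathSp) : Set (EReal × ℝ) :=
  {p | p.2 ∈ π.I ∧ p.1 ≤ max (π.l p.2) (π.r p.2)}

/-- `L^c(π) = S ∖ L°(π)`. -/
def Lc (π : PathSp) : Set (EReal × ℝ) := (Lo π)ᶜ

/-- `R°(π)`. -/
def Ro (π : PathSp) : Set (EReal × ℝ) :=
  {p | p.2 ∈ interior π.I ∧ max (π.l p.2) (π.r p.2) < p.1}

/-- `R̄(π)`. -/
def Rbar (π : PathSp) : Set (EReal × ℝ) :=
  {p | p.2 ∈ π.I ∧ min (π.l p.2) (π.r p.2) ≤ p.1}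

/-- `π^⟨2⟩`: the ordered pairs of points of the closed graph. -/
def gr2 (π : PathSp) : Set ((EReal × ℝ) × (EReal × ℝ)) :=
  {q | q.1 ∈ graph π ∧ q.2 ∈ graph π ∧ gLe π q.1 q.2}

/-- `π̄^⟨2⟩`: the ordered pairs of points of the filled graph. -/
def fgr2 (π : PathSp) : Set ((EReal × ℝ) × (EReal × ℝ)) :=
  {q | q.1 ∈ fgraph π ∧ q.2 ∈ fgraph π ∧ gLe π q.1 q.2}

/-- Convergence `A_n → B` of closed subsets of `Y` in the local Hausdorff topology,
expressed through its standard sequential characterisation (Lemma 2.2 of the paper,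
which also shows this is independent of the choice of metric): every point of `B` is a
limit of points of `A_{n,∞} = A_n ∪ {∞}` in the one-point compactification, and every
cluster point in `Y` of such a sequence lies in `B`. -/
def LHConv {Y : Type*} [TopologicalSpace Y] (A : ℕ → Set Y) (B : Set Y) : Prop :=
  (∀ x ∈ B, ∃ u : ℕ → OnePoint Y,
    (∀ n, u n ∈ insert OnePoint.infty ((fun y : Y => (y : OnePoint Y)) '' A n)) ∧
      Tendsto u atTop (𝓝 (x : OnePoint Y))) ∧
  (∀ x : Y, (∃ u : ℕ → OnePoint Y,
    (∀ n, u n ∈ insert OnePoint.infty ((fun y : Y => (y : OnePoint Y)) '' A n)) ∧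
      MapClusterPt (x : OnePoint Y) atTop u) → x ∈ B)

/-- Convergence of compact sets of paths in the Hausdorff "metric" associated to `dM1`. -/
def HausConvM1 (A : ℕ → Set PathSp) (B : Set PathSp) : Prop :=
  Tendsto (fun n => hausDist dM1 (A n) B) atTop (𝓝 0)

/-! `φ = sin ∘ arctan` is monotone, so the `d_ℝ̄`-distance from `y` to `[x ∧ z, x ∨ z]` is `0`
if `y` lies in that interval and `min (d_ℝ̄(y,x), d_ℝ̄(y,z))` otherwise. Hence, for `η ≥ 0`,
`m_{T,δ}(π) > η` iff `π ∈ T²_{T,δ,η}`, `m^J_{T,δ}(π) > η` iff `π ∈ T^J_{T,δ,η} ∪ T^M_{T,δ,η}` and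
`m^M_{T,δ}(π) > η` iff `π ∈ T^M_{T,δ,η}`, so the events on the two sides of each equivalence
coincide for every `δ`; the `≥ ε` in (b) and (c) is immaterial since `{m ≥ ε} ⊆ {m > ε/2}`. -/

lemma phiR_coe (a : ℝ) : phiR a = Real.sin (Real.arctan a) := by
  simp [phiR, Real.sin_arctan]

lemma abs_phiR_le_one (x : EReal) : |phiR x| ≤ 1 := by
  induction x using EReal.rec with
  | bot => simp [phiR]
  | coe a => rw [phiR_coe]; exact Real.abs_sin_le_one _
  | top => simp [phiR]

lemma monotone_phiR : Monotone phiR := by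
  intro x y hxy
  induction x using EReal.rec with
  | bot => simpa [phiR] using (abs_le.1 (abs_phiR_le_one y)).1
  | top => rw [top_le_iff.1 hxy]
  | coe a =>
    induction y using EReal.rec with
    | bot => exact absurd (le_bot_iff.1 hxy) (EReal.coe_ne_bot a)
    | top => simpa [phiR] using (abs_le.1 (abs_phiR_le_one a)).2
    | coe b =>
      rw [phiR_coe, phiR_coe]
      exact Real.sin_le_sin_of_le_of_le_pi_div_two (Real.neg_pi_div_two_lt_arctan a).le
        (Real.arctan_lt_pi_div_two b).le (Real.arctan_strictMono.monotone (mod_cast hxy))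

lemma dR_self (x : EReal) : dR x x = 0 := by simp [dR]

lemma dR_comm (x y : EReal) : dR x y = dR y x := abs_sub_comm _ _

lemma dR_nonneg (x y : EReal) : 0 ≤ dR x y := abs_nonneg _

lemma dR_le_two (x y : EReal) : dR x y ≤ 2 := by
  have hx := abs_le.1 (abs_phiR_le_one x)
  have hy := abs_le.1 (abs_phiR_le_one y)
  rw [dR, abs_le]
  constructor <;> linarith

lemma ne_of_lt_dR {x y : EReal} {η : ℝ} (hη : 0 ≤ η) (h : η < dR x y) : x ≠ y := by
  rintro rfl
  exact absurd h (by simpa [dR_self] using hη)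

lemma dR_le_dR_of_mem_uIcc {y m w : EReal} (hm : m ∈ uIcc y w) : dR y m ≤ dR y w := by
  rw [dR, dR, abs_sub_comm, abs_sub_comm (phiR y)]
  exact abs_sub_left_of_mem_uIcc (monotone_phiR.image_uIcc_subset (mem_image_of_mem _ hm))

lemma min_dR_le_dR_of_notMem_uIcc {x y z w : EReal} (hy : y ∉ uIcc x z) (hw : w ∈ uIcc x z) :
    min (dR y x) (dR y z) ≤ dR y w := by
  rw [uIcc, mem_Icc, not_and_or, not_le, not_le] at hy
  rw [uIcc, mem_Icc] at hw
  rcases hy with hy | hy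
  · calc min (dR y x) (dR y z) ≤ dR y (x ⊓ z) := by rcases min_choice x z with h | h <;> simp [h]
      _ ≤ dR y w := dR_le_dR_of_mem_uIcc (mem_uIcc_of_le hy.le hw.1)
  · calc min (dR y x) (dR y z) ≤ dR y (x ⊔ z) := by rcases max_choice x z with h | h <;> simp [h]
      _ ≤ dR y w := dR_le_dR_of_mem_uIcc (mem_uIcc_of_ge hw.2 hy.le)

lemma sInf_dR_uIcc_of_mem {x y z : EReal} (hy : y ∈ uIcc x z) :
    sInf ((dR y) '' uIcc x z) = 0 :=
  IsLeast.csInf_eq ⟨⟨y, hy, dR_self y⟩, by rintro _ ⟨w, -, rfl⟩; exact dR_nonneg y w⟩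

lemma sInf_dR_uIcc_of_notMem {x y z : EReal} (hy : y ∉ uIcc x z) :
    sInf ((dR y) '' uIcc x z) = min (dR y x) (dR y z) := by
  refine IsLeast.csInf_eq ⟨?_, ?_⟩
  · rcases min_choice (dR y x) (dR y z) with h | h <;> rw [h]
    exacts [⟨x, left_mem_uIcc, rfl⟩, ⟨z, right_mem_uIcc, rfl⟩]
  · rintro _ ⟨w, hw, rfl⟩
    exact min_dR_le_dR_of_notMem_uIcc hy hw

lemma lt_sInf_dR_uIcc_iff {x y z : EReal} {η : ℝ} (hη : 0 ≤ η) :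
    η < sInf ((dR y) '' uIcc x z) ↔ y ∉ uIcc x z ∧ η < dR y x ∧ η < dR y z := by
  by_cases hy : y ∈ uIcc x z
  · simp [sInf_dR_uIcc_of_mem hy, hy, hη]
  · simp [sInf_dR_uIcc_of_notMem hy, hy]

lemma sInf_dR_uIcc_le_two (x y z : EReal) : sInf ((dR y) '' uIcc x z) ≤ 2 := by
  by_cases hy : y ∈ uIcc x z
  · rw [sInf_dR_uIcc_of_mem hy]; norm_num
  · rw [sInf_dR_uIcc_of_notMem hy]; exact (min_le_left _ _).trans (dR_le_two y x)

lemma _root_.Real.lt_sSup_iff_of_nonneg {s : Set ℝ} (hs : BddAbove s) {η : ℝ} (hη : 0 ≤ η) :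
    η < sSup s ↔ ∃ a ∈ s, η < a := by
  rcases s.eq_empty_or_nonempty with rfl | hne
  · simpa using hη
  · exact lt_csSup_iff hs hne

lemma lt_sSup_image_iff_inter_nonempty {α : Type*} {f : α → ℝ} (hf : BddAbove (range f))
    {η : ℝ} (hη : 0 ≤ η) {T : Set α} (hT : ∀ a, η < f a ↔ a ∈ T) (S : Set α) :
    η < sSup (f '' S) ↔ (S ∩ T).Nonempty := by
  rw [Real.lt_sSup_iff_of_nonneg (hf.mono (image_subset_range f S)) hη]
  simp [hT, Set.Nonempty]

lemma modC_le_two (π : PathSp) (T δ : ℝ) : modC π T δ ≤ 2 :=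
  Real.sSup_le (by rintro _ ⟨x, y, -, rfl⟩; exact dR_le_two x y) zero_le_two

lemma modJ_le_two (π : PathSp) (T δ : ℝ) : modJ π T δ ≤ 2 :=
  Real.sSup_le (by rintro _ ⟨x, y, z, -, rfl⟩; exact (min_le_left _ _).trans (dR_le_two y x))
    zero_le_two

lemma modM_le_two (π : PathSp) (T δ : ℝ) : modM π T δ ≤ 2 :=
  Real.sSup_le (by rintro _ ⟨x, y, z, -, rfl⟩; exact sInf_dR_uIcc_le_two x y z) zero_le_two

lemma lt_modC_iff (π : PathSp) (T δ : ℝ) {η : ℝ} (hη : 0 ≤ η) :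
    η < modC π T δ ↔ π ∈ T2set T δ η := by
  rw [modC, Real.lt_sSup_iff_of_nonneg ⟨2, ?_⟩ hη]
  · simp [T2set]
  · rintro _ ⟨x, y, -, rfl⟩; exact dR_le_two x y

lemma lt_modJ_iff (π : PathSp) (T δ : ℝ) {η : ℝ} (hη : 0 ≤ η) :
    η < modJ π T δ ↔ ∃ x y z, (x, y, z) ∈ Delta3 π T δ ∧ η < dR y x ∧ η < dR y z := by
  rw [modJ, Real.lt_sSup_iff_of_nonneg ⟨2, ?_⟩ hη]
  · simp
  · rintro _ ⟨x, y, z, -, rfl⟩; exact (min_le_left _ _).trans (dR_le_two y x)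

lemma lt_modM_iff (π : PathSp) (T δ : ℝ) {η : ℝ} (hη : 0 ≤ η) :
    η < modM π T δ ↔
      ∃ x y z, (x, y, z) ∈ Delta3 π T δ ∧ y ∉ uIcc x z ∧ η < dR y x ∧ η < dR y z := by
  rw [modM, Real.lt_sSup_iff_of_nonneg ⟨2, ?_⟩ hη]
  · simp [lt_sInf_dR_uIcc_iff hη]
  · rintro _ ⟨x, y, z, -, rfl⟩; exact sInf_dR_uIcc_le_two x y z

lemma mem_TJ_union_TM_iff (π : PathSp) (T δ : ℝ) {η : ℝ} (hη : 0 ≤ η) :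
    π ∈ TJ T δ η ∪ TM T δ η ↔
      ∃ x y z, (x, y, z) ∈ Delta3 π T δ ∧ η < dR y x ∧ η < dR y z := by
  constructor
  · rintro ((⟨x, y, z, h, -, -, hxy, hyz⟩ | ⟨x, y, z, h, -, -, hxy, hyz⟩) |
      (⟨x, y, z, h, -, -, hxy, hyz⟩ | ⟨x, y, z, h, -, -, hxy, hyz⟩)) <;>
    exact ⟨x, y, z, h, dR_comm x y ▸ hxy, hyz⟩
  · rintro ⟨x, y, z, h, hyx, hyz⟩
    have hxy : η < dR x y := dR_comm x y ▸ hyx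
    rcases lt_or_gt_of_ne (ne_of_lt_dR hη hyx) with hy | hy <;>
      rcases lt_or_gt_of_ne (ne_of_lt_dR hη hyz) with hz | hz
    · exact Or.inr (Or.inr ⟨x, y, z, h, hy, hz, hxy, hyz⟩)
    · exact Or.inl (Or.inr ⟨x, y, z, h, hy, hz, hxy, hyz⟩)
    · exact Or.inl (Or.inl ⟨x, y, z, h, hy, hz, hxy, hyz⟩)
    · exact Or.inr (Or.inl ⟨x, y, z, h, hy, hz, hxy, hyz⟩)

lemma mem_TM_iff (π : PathSp) (T δ η : ℝ) :
    π ∈ TM T δ η ↔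
      ∃ x y z, (x, y, z) ∈ Delta3 π T δ ∧ y ∉ uIcc x z ∧ η < dR y x ∧ η < dR y z := by
  constructor
  · rintro (⟨x, y, z, h, hx, hz, hxy, hyz⟩ | ⟨x, y, z, h, hx, hz, hxy, hyz⟩)
    · exact ⟨x, y, z, h, notMem_uIcc_of_gt hx hz, dR_comm x y ▸ hxy, hyz⟩
    · exact ⟨x, y, z, h, notMem_uIcc_of_lt hx hz, dR_comm x y ▸ hxy, hyz⟩
  · rintro ⟨x, y, z, h, hy, hyx, hyz⟩
    rw [uIcc, mem_Icc, not_and_or, not_le, not_le, lt_inf_iff, sup_lt_iff] at hy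
    rcases hy with ⟨hx, hz⟩ | ⟨hx, hz⟩
    · exact Or.inr ⟨x, y, z, h, hx, hz, dR_comm x y ▸ hyx, hyz⟩
    · exact Or.inl ⟨x, y, z, h, hx, hz, dR_comm x y ▸ hyx, hyz⟩

lemma tendsto_iSup_measure_le_iff_lt {Γ : Type*} {Ω : Γ → Type*} [∀ γ, MeasurableSpace (Ω γ)]
    (P : ∀ γ, Measure (Ω γ)) (M : ℝ → ∀ γ, ℝ → Ω γ → ℝ) (l : Filter ℝ) :
    (∀ T ε : ℝ, 0 < T → 0 < ε →
        Tendsto (fun δ => ⨆ γ, P γ {ω | ε ≤ M T γ δ ω}) l (𝓝 0)) ↔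
      (∀ T ε : ℝ, 0 < T → 0 < ε →
        Tendsto (fun δ => ⨆ γ, P γ {ω | ε < M T γ δ ω}) l (𝓝 0)) := by
  have squeeze {f g : ℝ → ENNReal} (hg : Tendsto g l (𝓝 0)) (hfg : ∀ δ, f δ ≤ g δ) :
      Tendsto f l (𝓝 0) :=
    tendsto_of_tendsto_of_tendsto_of_le_of_le tendsto_const_nhds hg (fun _ => zero_le) hfg
  refine ⟨fun h T ε hT hε => squeeze (h T ε hT hε) fun δ => ?_,
    fun h T ε hT hε => squeeze (h T (ε / 2) hT (half_pos hε)) fun δ => ?_⟩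
  · exact iSup_mono fun γ => measure_mono fun ω (hω : ε < _) => hω.le
  · exact iSup_mono fun γ => measure_mono fun ω (hω : ε ≤ _) => (half_lt_self hε).trans_le hω

theorem alternative_tightness_criteria_general
    {Γ : Type*} {Ω : Γ → Type*} [∀ γ, MeasurableSpace (Ω γ)]
    (P : ∀ γ, Measure (Ω γ))
    (A : ∀ γ, Ω γ → KP J1Top) :
    ((∀ T ε : ℝ, 0 < T → 0 < ε →
        Tendsto
          (fun δ : ℝ => ⨆ γ, P γ {ω | ε < sSup ((fun π => modC π T δ) '' (A γ ω).1)})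
          (𝓝[>] (0 : ℝ)) (𝓝 (0 : ENNReal))) ↔
      (∀ T η : ℝ, 0 < T → 0 < η →
        Tendsto (fun δ : ℝ => ⨆ γ, P γ {ω | ((A γ ω).1 ∩ T2set T δ η).Nonempty})
          (𝓝[>] (0 : ℝ)) (𝓝 (0 : ENNReal)))) ∧
    ((∀ T ε : ℝ, 0 < T → 0 < ε →
        Tendsto
          (fun δ : ℝ => ⨆ γ, P γ {ω | ε ≤ sSup ((fun π => modJ π T δ) '' (A γ ω).1)})
          (𝓝[>] (0 : ℝ)) (𝓝 (0 : ENNReal))) ↔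
      (∀ T η : ℝ, 0 < T → 0 < η →
        Tendsto
          (fun δ : ℝ => ⨆ γ, P γ {ω | ((A γ ω).1 ∩ (TJ T δ η ∪ TM T δ η)).Nonempty})
          (𝓝[>] (0 : ℝ)) (𝓝 (0 : ENNReal)))) ∧
    ((∀ T ε : ℝ, 0 < T → 0 < ε →
        Tendsto
          (fun δ : ℝ => ⨆ γ, P γ {ω | ε ≤ sSup ((fun π => modM π T δ) '' (A γ ω).1)})
          (𝓝[>] (0 : ℝ)) (𝓝 (0 : ENNReal))) ↔
      (∀ T η : ℝ, 0 < T → 0 < η →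
        Tendsto (fun δ : ℝ => ⨆ γ, P γ {ω | ((A γ ω).1 ∩ TM T δ η).Nonempty})
          (𝓝[>] (0 : ℝ)) (𝓝 (0 : ENNReal)))) := by
  have bdd {f : PathSp → ℝ} (hf : ∀ π, f π ≤ 2) : BddAbove (range f) :=
    ⟨2, forall_mem_range.2 hf⟩
  have eventC {η : ℝ} (hη : 0 ≤ η) (T δ : ℝ) :=
    lt_sSup_image_iff_inter_nonempty (bdd (modC_le_two · T δ)) hη (lt_modC_iff · T δ hη)
  have eventJ {η : ℝ} (hη : 0 ≤ η) (T δ : ℝ) :=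
    lt_sSup_image_iff_inter_nonempty (bdd (modJ_le_two · T δ)) hη
      fun π => (lt_modJ_iff π T δ hη).trans (mem_TJ_union_TM_iff π T δ hη).symm
  have eventM {η : ℝ} (hη : 0 ≤ η) (T δ : ℝ) :=
    lt_sSup_image_iff_inter_nonempty (bdd (modM_le_two · T δ)) hη
      fun π => (lt_modM_iff π T δ hη).trans (mem_TM_iff π T δ η).symm
  refine ⟨forall₄_congr fun T ε _ hε => ?_,
    (tendsto_iSup_measure_le_iff_lt P _ _).trans (forall₄_congr fun T ε _ hε => ?_),
    (tendsto_iSup_measure_le_iff_lt P _ _).trans (forall₄_congr fun T ε _ hε => ?_)⟩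
  · simp only [eventC hε.le]
  · simp only [eventJ hε.le]
  · simp only [eventM hε.le]

/-- **Lemma (Alternative tightness criteria).**
For a family of `K_+(Π)`-valued random variables:
(a) the modulus condition with `m_{T,δ}` is equivalent to the condition with `T²_{T,δ,η}`;
(b) the modulus condition with `m^J_{T,δ}` is equivalent to the condition with
    `T^J_{T,δ,η} ∪ T^M_{T,δ,η}`;
(c) the modulus condition with `m^M_{T,δ}` is equivalent to the condition with
    `T^M_{T,δ,η}`. -/
theorem alternative_tightness_criteria
    {Γ : Type*} {Ω : Γ → Type*} [∀ γ, MeasurableSpace (Ω γ)]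
    (P : ∀ γ, Measure (Ω γ)) (hP : ∀ γ, IsProbabilityMeasure (P γ))
    (A : ∀ γ, Ω γ → KP J1Top)
    (hmeas : ∀ γ, @Measurable _ _ _ (@borel _ (KPtop J1Top dJ1)) (A γ)) :
    ((∀ T ε : ℝ, 0 < T → 0 < ε →
        Tendsto
          (fun δ : ℝ => ⨆ γ, P γ {ω | ε < sSup ((fun π => modC π T δ) '' (A γ ω).1)})
          (𝓝[>] (0 : ℝ)) (𝓝 (0 : ENNReal))) ↔
      (∀ T η : ℝ, 0 < T → 0 < η →
        Tendsto (fun δ : ℝ => ⨆ γ, P γ {ω | ((A γ ω).1 ∩ T2set T δ η).Nonempty})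
          (𝓝[>] (0 : ℝ)) (𝓝 (0 : ENNReal)))) ∧
    ((∀ T ε : ℝ, 0 < T → 0 < ε →
        Tendsto
          (fun δ : ℝ => ⨆ γ, P γ {ω | ε ≤ sSup ((fun π => modJ π T δ) '' (A γ ω).1)})
          (𝓝[>] (0 : ℝ)) (𝓝 (0 : ENNReal))) ↔
      (∀ T η : ℝ, 0 < T → 0 < η →
        Tendsto
          (fun δ : ℝ => ⨆ γ, P γ {ω | ((A γ ω).1 ∩ (TJ T δ η ∪ TM T δ η)).Nonempty})
          (𝓝[>] (0 : ℝ)) (𝓝 (0 : ENNReal)))) ∧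
    ((∀ T ε : ℝ, 0 < T → 0 < ε →
        Tendsto
          (fun δ : ℝ => ⨆ γ, P γ {ω | ε ≤ sSup ((fun π => modM π T δ) '' (A γ ω).1)})
          (𝓝[>] (0 : ℝ)) (𝓝 (0 : ENNReal))) ↔
      (∀ T η : ℝ, 0 < T → 0 < η →
        Tendsto (fun δ : ℝ => ⨆ γ, P γ {ω | ((A γ ω).1 ∩ TM T δ η).Nonempty})
          (𝓝[>] (0 : ℝ)) (𝓝 (0 : ENNReal)))) :=
  alternative_tightness_criteria_general P A

end PathsPaper
end
end

section
/- Assume that π_n ∈ Π^| satisfy π_n → π as n → ∞ in the M1 topology for some π ∈ Π^|. Then L̄(π_n) → L̄(π) and L^c(π_n) → L^c(π) in the local Hausdorff topology on Cl(S), where S := ℝ̄ × ℝ. -/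
noncomputable section

open Set Filter Topology MeasureTheory

namespace PathsPaper

/-!
M1 convergence gives Hausdorff convergence of the filled graphs `π̄ₙ∗ → π̄∗` in `d_sqz`, and `Θ`
is an embedding on the finite points; so every finite point of `π̄` is a limit of points of the
`π̄ₙ`, and every finite limit of points of the `π̄ₙ` lies in `π̄`. At a time `t`, `L̄` is bounded
above by `π(t−) ∨ π(t+)` and `L°` by `π(t−) ∧ π(t+)`, both values on the filled graph, so these
approximations carry over to the areas. Two inclusions need the domains themselves: a point of
`L^c(π)` at a time `t ∉ I°_π` is approximated along times outside `I_π`, which are eventually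
outside `I_{πₙ}`; and for a limit of points of `L^c(πₙ)` at a time in `I°_π`, points of `π̄ₙ` on
both sides together with the connectedness of `I_{πₙ}` make the nearby times interior to `I_{πₙ}`.
-/

lemma tanh_strictMono : StrictMono Real.tanh := fun a b hab => by
  have mem : ∀ x, Real.tanh x ∈ Ioo (-1 : ℝ) 1 :=
    fun x => ⟨Real.neg_one_lt_tanh x, Real.tanh_lt_one x⟩
  exact (Real.strictMonoOn_artanh.lt_iff_lt (mem a) (mem b)).1 (by simpa [Real.artanh_tanh])

@[simp] lemma etanh_top : etanh ⊤ = 1 := rfl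

@[simp] lemma etanh_bot : etanh ⊥ = -1 := rfl

@[simp] lemma etanh_coe (x : ℝ) : etanh x = Real.tanh x := by simp [etanh]

lemma etanh_mem_Icc (x : EReal) : etanh x ∈ Icc (-1 : ℝ) 1 := by
  induction x using EReal.rec with
  | bot => simp
  | coe x => simp [(Real.neg_one_lt_tanh x).le, (Real.tanh_lt_one x).le]
  | top => simp

lemma etanh_strictMono : StrictMono etanh := by
  intro a b hab
  induction a using EReal.rec with
  | bot =>
    induction b using EReal.rec with
    | bot => exact absurd hab (lt_irrefl _)
    | coe b => simpa using Real.neg_one_lt_tanh b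
    | top => norm_num
  | coe a =>
    induction b using EReal.rec with
    | bot => exact absurd hab (by simp)
    | coe b => simpa using tanh_strictMono (EReal.coe_lt_coe_iff.1 hab)
    | top => simpa using Real.tanh_lt_one a
  | top => exact absurd hab (by simp)

def etanhOrderIso : EReal ≃o Icc (-1 : ℝ) 1 :=
  StrictMono.orderIsoOfSurjective (fun x => ⟨etanh x, etanh_mem_Icc x⟩)
    (fun _ _ hab => Subtype.mk_lt_mk.2 (etanh_strictMono hab)) fun ⟨y, hy₁, hy₂⟩ => by
      rcases hy₁.eq_or_lt with rfl | hy₁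
      · exact ⟨⊥, rfl⟩
      rcases hy₂.eq_or_lt with rfl | hy₂
      · exact ⟨⊤, rfl⟩
      obtain ⟨x, -, hx⟩ := Real.tanh_surjOn ⟨hy₁, hy₂⟩
      exact ⟨x, by simp [hx]⟩

lemma isEmbedding_etanh : IsEmbedding etanh :=
  IsEmbedding.subtypeVal.comp etanhOrderIso.toHomeomorph.isEmbedding

lemma isEmbedding_tanh : IsEmbedding Real.tanh := by
  have : Real.tanh = etanh ∘ Real.toEReal := funext fun x => (etanh_coe x).symm
  exact this ▸ isEmbedding_etanh.comp EReal.isEmbedding_coe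

@[simp] lemma theta_inl (p : EReal × ℝ) :
    theta (Sum.inl p) = (etanh p.1 / (1 + |p.2|), Real.tanh p.2) := rfl

lemma continuous_theta_inl : Continuous fun p : EReal × ℝ => theta (Sum.inl p) := by
  simp only [theta_inl]
  have hden : ∀ p : EReal × ℝ, 1 + |p.2| ≠ 0 := fun p => by positivity
  exact ((isEmbedding_etanh.continuous.comp continuous_fst).div
    (continuous_const.add continuous_snd.abs) hden).prodMk
    (isEmbedding_tanh.continuous.comp continuous_snd)

lemma tendsto_of_tendsto_theta_inl {α : Type*} {l : Filter α} {q : α → EReal × ℝ}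
    {p : EReal × ℝ} (h : Tendsto (fun n => theta (Sum.inl (q n))) l (𝓝 (theta (Sum.inl p)))) :
    Tendsto q l (𝓝 p) := by
  simp only [theta_inl, nhds_prod_eq, tendsto_prod_iff'] at h
  have h₂ : Tendsto (fun n => (q n).2) l (𝓝 p.2) :=
    isEmbedding_tanh.tendsto_nhds_iff.2 h.2
  have hden : Tendsto (fun n => 1 + |(q n).2|) l (𝓝 (1 + |p.2|)) :=
    tendsto_const_nhds.add h₂.abs
  have h₁ : Tendsto (fun n => etanh (q n).1) l (𝓝 (etanh p.1)) := by
    have hne : ∀ x : ℝ, 1 + |x| ≠ 0 := fun x => by positivity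
    have := (h.1.mul hden).congr fun n => div_mul_cancel₀ _ (hne _)
    rwa [div_mul_cancel₀ _ (hne _)] at this
  exact (isEmbedding_etanh.tendsto_nhds_iff.2 h₁).prodMk_nhds h₂

lemma dSqz_comm (z z' : Rsq) : dSqz z z' = dSqz z' z := by
  unfold dSqz; ring_nf

lemma norm_theta_sub_le_dSqz (z z' : Rsq) : ‖theta z' - theta z‖ ≤ dSqz z z' := by
  rw [Prod.norm_def, Prod.fst_sub, Prod.snd_sub, Real.norm_eq_abs, Real.norm_eq_abs,
    abs_sub_comm, abs_sub_comm (theta z').2]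
  exact max_le (Real.abs_le_sqrt (le_add_of_nonneg_right (sq_nonneg _)))
    (Real.abs_le_sqrt (le_add_of_nonneg_left (sq_nonneg _)))

lemma abs_theta_le_one (z : Rsq) : |(theta z).1| ≤ 1 ∧ |(theta z).2| ≤ 1 := by
  rcases z with ⟨x, t⟩ | b
  · have hpos : (0 : ℝ) < 1 + |t| := by positivity
    simp only [theta_inl, abs_div, abs_of_pos hpos, div_le_one hpos]
    exact ⟨(abs_le.2 (etanh_mem_Icc x)).trans (by simp), (Real.abs_tanh_lt_one t).le⟩
  · cases b <;> simp [theta]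

lemma dSqz_le_three (z z' : Rsq) : dSqz z z' ≤ 3 := by
  obtain ⟨h₁, h₂⟩ := abs_theta_le_one z
  obtain ⟨h₁', h₂'⟩ := abs_theta_le_one z'
  rw [abs_le] at h₁ h₂ h₁' h₂'
  refine Real.sqrt_le_iff.2 ⟨by norm_num, ?_⟩
  nlinarith

lemma exists_inl_of_tendsto_theta {α : Type*} {l : Filter α} {z : α → Rsq} {p : EReal × ℝ}
    (h : Tendsto (fun n => theta (z n)) l (𝓝 (theta (Sum.inl p)))) :
    ∃ q : α → EReal × ℝ, (∀ᶠ n in l, z n = Sum.inl (q n)) ∧ Tendsto q l (𝓝 p) := by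
  -- the points at infinity have `|Θ₂| = 1`, the finite ones `|Θ₂| < 1`
  have hfin : ∀ᶠ n in l, |(theta (z n)).2| < 1 :=
    ((continuous_abs.comp continuous_snd).tendsto _ |>.comp h).eventually
      (eventually_lt_nhds (by simpa using Real.abs_tanh_lt_one p.2))
  set q : α → EReal × ℝ := fun n => (z n).elim id fun _ => p
  have hq : ∀ᶠ n in l, z n = Sum.inl (q n) := by
    filter_upwards [hfin] with n hn
    rcases hz : z n with r | b
    · simp [q, hz]
    · rw [hz] at hn
      cases b <;> simp [theta] at hn
  refine ⟨q, hq, tendsto_of_tendsto_theta_inl (h.congr' ?_)⟩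
  filter_upwards [hq] with n hn
  rw [hn]

lemma tendsto_theta_of_dSqz_le {α : Type*} {l : Filter α} {w z : α → Rsq} {a : ℝ × ℝ}
    {ε : α → ℝ} (hw : Tendsto (fun n => theta (w n)) l (𝓝 a)) (hε : Tendsto ε l (𝓝 0))
    (hwz : ∀ᶠ n in l, dSqz (w n) (z n) ≤ ε n) : Tendsto (fun n => theta (z n)) l (𝓝 a) := by
  have hsub : Tendsto (fun n => theta (z n) - theta (w n)) l (𝓝 0) :=
    squeeze_zero_norm' (hwz.mono fun n hn => (norm_theta_sub_le_dSqz _ _).trans hn) hε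
  simpa using hw.add hsub

lemma mem_uIcc_of_tendsto {α β : Type*} [LinearOrder β] [TopologicalSpace β]
    [OrderClosedTopology β] {l : Filter α} [l.NeBot] {a b x : α → β} {c d y : β}
    (ha : Tendsto a l (𝓝 c)) (hb : Tendsto b l (𝓝 d)) (hx : Tendsto x l (𝓝 y))
    (h : ∀ᶠ n in l, x n ∈ uIcc (a n) (b n)) : y ∈ uIcc c d :=
  ⟨le_of_tendsto_of_tendsto (ha.min hb) hx (h.mono fun _ hn => hn.1),
    le_of_tendsto_of_tendsto hx (ha.max hb) (h.mono fun _ hn => hn.2)⟩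

lemma exists_tendsto_of_forall_eventually_exists_dist_lt {X : Type*} [PseudoMetricSpace X]
    {B : ℕ → Set X} {x : X} (h : ∀ δ > 0, ∀ᶠ n in atTop, ∃ y ∈ B n, dist x y < δ) :
    ∃ g : ℕ → X, (∀ᶠ n in atTop, g n ∈ B n) ∧ Tendsto g atTop (𝓝 x) := by
  have hg : ∀ n : ℕ, ∃ y, (B n).Nonempty →
      y ∈ B n ∧ dist x y < Metric.infDist x (B n) + 1 / (n + 1) := by
    intro n
    by_cases hne : (B n).Nonempty
    · obtain ⟨y, hy, hxy⟩ :=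
        (Metric.infDist_lt_iff hne).1 (lt_add_of_pos_right _ Nat.one_div_pos_of_nat)
      exact ⟨y, fun _ => ⟨hy, hxy⟩⟩
    · exact ⟨x, fun h => absurd h hne⟩
  choose g hg using hg
  have hne : ∀ᶠ n in atTop, (B n).Nonempty := (h 1 one_pos).mono fun n ⟨y, hy, _⟩ => ⟨y, hy⟩
  refine ⟨g, hne.mono fun n hn => (hg n hn).1, Metric.tendsto_nhds.2 fun δ hδ => ?_⟩
  filter_upwards [h (δ / 2) (by positivity), tendsto_one_div_add_atTop_nhds_zero_nat.eventually
    (eventually_lt_nhds (by positivity : (0 : ℝ) < δ / 2))] with n ⟨y, hy, hxy⟩ hn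
  have hgn := (hg n ⟨y, hy⟩).2
  have hinf := Metric.infDist_le_dist_of_mem (x := x) hy
  rw [dist_comm]
  linarith

lemma lhConv_of_tendsto {Y : Type*} [TopologicalSpace Y] [FirstCountableTopology Y]
    {A : ℕ → Set Y} {B : Set Y}
    (happrox : ∀ x ∈ B, ∃ g : ℕ → Y, (∀ᶠ n in atTop, g n ∈ A n) ∧ Tendsto g atTop (𝓝 x))
    (hlim : ∀ φ : ℕ → ℕ, StrictMono φ → ∀ y : ℕ → Y, (∀ k, y k ∈ A (φ k)) →
      ∀ x, Tendsto y atTop (𝓝 x) → x ∈ B) :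
    LHConv A B := by
  classical
  refine ⟨fun x hx => ?_, fun x ⟨u, hu, hux⟩ => ?_⟩
  · obtain ⟨g, hg, hgx⟩ := happrox x hx
    obtain ⟨N, hN⟩ := eventually_atTop.1 hg
    refine ⟨fun n => if N ≤ n then (g n : OnePoint Y) else OnePoint.infty, fun n => ?_, ?_⟩
    · dsimp only
      split_ifs with hn
      exacts [mem_insert_of_mem _ ⟨g n, hN n hn, rfl⟩, mem_insert _ _]
    · refine ((OnePoint.continuous_coe.tendsto x).comp hgx).congr' ?_
      filter_upwards [eventually_ge_atTop N] with n hn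
      simp [hn]
  · obtain ⟨s, hs⟩ := (𝓝 x).exists_antitone_basis
    have hfreq : ∀ k, ∃ᶠ n in atTop, u n ∈ ((↑) : Y → OnePoint Y) '' s k := fun k =>
      mapClusterPt_iff_frequently.1 hux _ (OnePoint.isOpenMap_coe.image_mem_nhds (hs.mem k))
    obtain ⟨φ, hφ, hφs⟩ := extraction_forall_of_frequently hfreq
    choose y hys hyu using hφs
    refine hlim φ hφ y (fun k => ?_) x (hs.tendsto hys)
    have := hu (φ k)
    rw [← hyu k, mem_insert_iff] at this
    rcases this with h | ⟨z, hz, hzy⟩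
    · exact absurd h (OnePoint.coe_ne_infty _)
    · exact OnePoint.coe_injective hzy ▸ hz

@[simp] lemma inl_mem_starSet {G : Set (EReal × ℝ)} {p : EReal × ℝ} :
    Sum.inl p ∈ starSet G ↔ p ∈ G := by
  simp [starSet]

lemma inr_mem_starSet (G : Set (EReal × ℝ)) (b : Bool) : Sum.inr b ∈ starSet G := by
  cases b <;> simp [starSet]

def trivialCorr (A B : Set Rsq) : Set (Rsq × Rsq) :=
  ({Sum.inr false} ×ˢ B) ∪ (A ×ˢ {Sum.inr true})

lemma isCorr_trivialCorr (G₁ G₂ : Set (EReal × ℝ)) :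
    IsCorr (starSet G₁) (starSet G₂) (trivialCorr (starSet G₁) (starSet G₂)) := by
  refine ⟨?_, fun a ha => ⟨_, inr_mem_starSet _ true, .inr ⟨ha, rfl⟩⟩,
    fun b hb => ⟨_, inr_mem_starSet _ false, .inl ⟨rfl, hb⟩⟩⟩
  rintro ⟨a, b⟩ (⟨rfl, hb⟩ | ⟨ha, rfl⟩)
  exacts [⟨inr_mem_starSet _ _, hb⟩, ⟨ha, inr_mem_starSet _ _⟩]

lemma isMono_trivialCorr (π₁ π₂ : PathSp) (A B : Set Rsq) : IsMono π₁ π₂ (trivialCorr A B) := by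
  rintro ⟨⟨a, b⟩, -, ⟨a', b'⟩, (⟨rfl, -⟩ | ⟨-, rfl⟩), h₁, h₂⟩
  · rcases a with _ | _ <;> simp [sLt] at h₁
  · rcases b with _ | _ <;> simp [sLt] at h₂

lemma dSqz_le_corrSup {C : Set (Rsq × Rsq)} {z : Rsq × Rsq} (hz : z ∈ C) :
    dSqz z.1 z.2 ≤ corrSup C :=
  le_csSup ⟨3, by rintro _ ⟨w, -, rfl⟩; exact dSqz_le_three _ _⟩ ⟨z, hz, rfl⟩

/-- Hausdorff convergence of the filled graphs `π̄ₙ∗ → π̄∗` in the squeezed metric; the points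
`(∗,±∞)` lie in every `π̄∗`, so only the finite points need a partner. -/
def FGraphConv (πn : ℕ → PathSp) (π : PathSp) : Prop :=
  ∃ ε : ℕ → ℝ, Tendsto ε atTop (𝓝 0) ∧ ∀ n,
    (∀ p ∈ fgraph (πn n), ∃ z ∈ starSet (fgraph π), dSqz (Sum.inl p) z ≤ ε n) ∧
    (∀ p ∈ fgraph π, ∃ z ∈ starSet (fgraph (πn n)), dSqz (Sum.inl p) z ≤ ε n)

lemma FGraphConv.of_M1Conv {πn : ℕ → PathSp} {π : PathSp} (h : M1Conv πn π) :
    FGraphConv πn π := by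
  refine ⟨fun n => dM1 (πn n) π + 1 / (n + 1),
    by simpa using h.add tendsto_one_div_add_atTop_nhds_zero_nat, fun n => ?_⟩
  have hlt : dM1 (πn n) π < dM1 (πn n) π + 1 / (n + 1) :=
    lt_add_of_pos_right _ Nat.one_div_pos_of_nat
  unfold dM1 at hlt
  obtain ⟨_, ⟨C, hC, -, rfl⟩, hlt⟩ := exists_lt_of_csInf_lt
    (by exact ⟨_, _, isCorr_trivialCorr _ _, isMono_trivialCorr (πn n) π _ _, rfl⟩) hlt
  refine ⟨fun p hp => ?_, fun p hp => ?_⟩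
  · obtain ⟨z, hz, hpz⟩ := hC.2.1 _ (inl_mem_starSet.2 hp)
    exact ⟨z, hz, (dSqz_le_corrSup hpz).trans hlt.le⟩
  · obtain ⟨z, hz, hzp⟩ := hC.2.2 _ (inl_mem_starSet.2 hp)
    exact ⟨z, hz, dSqz_comm _ _ ▸ (dSqz_le_corrSup hzp).trans hlt.le⟩

lemma isClosed_fgraph (π : PathSp) : IsClosed (fgraph π) := by
  refine IsSeqClosed.isClosed fun w p hw hwp => ?_
  have ht : Tendsto (fun n => (w n).2) atTop (𝓝 p.2) := hwp.snd_nhds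
  have hx : Tendsto (fun n => (w n).1) atTop (𝓝 p.1) := hwp.fst_nhds
  have htI : p.2 ∈ π.I := π.closed_I.mem_of_tendsto ht (.of_forall fun n => (hw n).1)
  refine ⟨htI, ?_⟩
  have hcases : (∃ᶠ n in atTop, (w n).2 < p.2) ∨ (∃ᶠ n in atTop, (w n).2 = p.2) ∨
      ∃ᶠ n in atTop, p.2 < (w n).2 := by
    simp only [← frequently_or_distrib]
    exact .of_forall fun n => lt_trichotomy _ _
  rcases hcases with h | h | h <;> rw [frequently_iff_neBot] at h
  · have hF : Tendsto (fun n => (w n).2) (atTop ⊓ 𝓟 {n | (w n).2 < p.2})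
        (𝓝[π.I ∩ Iio p.2] p.2) := tendsto_nhdsWithin_iff.2
      ⟨ht.mono_left inf_le_left, mem_inf_of_right fun n hn => ⟨(hw n).1, hn⟩⟩
    have := mem_uIcc_of_tendsto ((π.left_cont _ htI).comp hF) ((π.left_lim _ htI).comp hF)
      (hx.mono_left inf_le_left) (.of_forall fun n => (hw n).2)
    rw [uIcc_self, mem_singleton_iff] at this
    exact this ▸ left_mem_uIcc
  · have hmem : ∀ᶠ n in atTop ⊓ 𝓟 {n | (w n).2 = p.2}, (w n).1 ∈ uIcc (π.l p.2) (π.r p.2) :=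
      mem_inf_of_right (mem_principal.2 fun n (hn : (w n).2 = p.2) => hn ▸ (hw n).2)
    exact isClosed_Icc.mem_of_tendsto (hx.mono_left inf_le_left) hmem
  · have hF : Tendsto (fun n => (w n).2) (atTop ⊓ 𝓟 {n | p.2 < (w n).2})
        (𝓝[π.I ∩ Ioi p.2] p.2) := tendsto_nhdsWithin_iff.2
      ⟨ht.mono_left inf_le_left, mem_inf_of_right fun n hn => ⟨(hw n).1, hn⟩⟩
    have := mem_uIcc_of_tendsto ((π.right_lim _ htI).comp hF) ((π.right_cont _ htI).comp hF)
      (hx.mono_left inf_le_left) (.of_forall fun n => (hw n).2)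
    rw [uIcc_self, mem_singleton_iff] at this
    exact this ▸ right_mem_uIcc

namespace FGraphConv

variable {πn : ℕ → PathSp} {π : PathSp}

lemma comp (h : FGraphConv πn π) {φ : ℕ → ℕ} (hφ : Tendsto φ atTop atTop) :
    FGraphConv (πn ∘ φ) π := by
  obtain ⟨ε, hε, hclose⟩ := h
  exact ⟨ε ∘ φ, hε.comp hφ, fun k => hclose (φ k)⟩

lemma exists_tendsto_of_mem_fgraph (h : FGraphConv πn π) {p : EReal × ℝ} (hp : p ∈ fgraph π) :
    ∃ q : ℕ → EReal × ℝ, (∀ᶠ n in atTop, q n ∈ fgraph (πn n)) ∧ Tendsto q atTop (𝓝 p) := by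
  obtain ⟨ε, hε, hclose⟩ := h
  choose z hz hpz using fun n => (hclose n).2 p hp
  obtain ⟨q, hzq, hq⟩ := exists_inl_of_tendsto_theta
    (tendsto_theta_of_dSqz_le tendsto_const_nhds hε (.of_forall hpz))
  exact ⟨q, hzq.mono fun n hn => inl_mem_starSet.1 (hn ▸ hz n), hq⟩

lemma mem_fgraph_of_tendsto (h : FGraphConv πn π) {q : ℕ → EReal × ℝ}
    (hq : ∀ᶠ n in atTop, q n ∈ fgraph (πn n)) {p : EReal × ℝ} (hqp : Tendsto q atTop (𝓝 p)) :
    p ∈ fgraph π := by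
  obtain ⟨ε, hε, hclose⟩ := h
  have : ∀ n, ∃ z ∈ starSet (fgraph π), q n ∈ fgraph (πn n) → dSqz (Sum.inl (q n)) z ≤ ε n := by
    intro n
    by_cases hn : q n ∈ fgraph (πn n)
    · obtain ⟨z, hz, hd⟩ := (hclose n).1 _ hn
      exact ⟨z, hz, fun _ => hd⟩
    · exact ⟨_, inr_mem_starSet _ false, fun h => absurd h hn⟩
  choose z hz hqz using this
  obtain ⟨r, hzr, hr⟩ := exists_inl_of_tendsto_theta
    (tendsto_theta_of_dSqz_le ((continuous_theta_inl.tendsto p).comp hqp) hε (hq.mono hqz))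
  exact (isClosed_fgraph π).mem_of_tendsto hr
    (hzr.mono fun n hn => inl_mem_starSet.1 (hn ▸ hz n))

lemma exists_subseq_tendsto_mem_fgraph (h : FGraphConv πn π) {q : ℕ → EReal × ℝ}
    (hq : ∀ᶠ n in atTop, q n ∈ fgraph (πn n)) {t : ℝ}
    (ht : Tendsto (fun n => (q n).2) atTop (𝓝 t)) :
    ∃ x : EReal, ∃ ψ : ℕ → ℕ, StrictMono ψ ∧ (x, t) ∈ fgraph π ∧
      Tendsto (fun k => (q (ψ k)).1) atTop (𝓝 x) := by
  obtain ⟨x, ψ, hψ, hx⟩ := CompactSpace.tendsto_subseq fun n => (q n).1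
  exact ⟨x, ψ, hψ, (h.comp hψ.tendsto_atTop).mem_fgraph_of_tendsto
    (hψ.tendsto_atTop.eventually hq) (hx.prodMk_nhds (ht.comp hψ.tendsto_atTop)), hx⟩

lemma eventually_notMem_I (h : FGraphConv πn π) {t : ℝ} (ht : t ∉ π.I) :
    ∀ᶠ n in atTop, t ∉ (πn n).I := by
  by_contra hfreq
  obtain ⟨φ, hφ, htφ⟩ := extraction_of_frequently_atTop
    ((not_eventually.1 hfreq).mono fun _ => not_not.1)
  obtain ⟨x, -, -, hx, -⟩ := (h.comp hφ.tendsto_atTop).exists_subseq_tendsto_mem_fgraph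
    (q := fun k => ((πn (φ k)).l t, t)) (.of_forall fun k => ⟨htφ k, left_mem_uIcc⟩)
    tendsto_const_nhds
  exact ht hx.1

lemma exists_eventually_Ioo_subset (h : FGraphConv πn π) (hconn : ∀ n, IsConn (πn n)) {t : ℝ}
    (ht : t ∈ interior π.I) : ∃ δ > 0, ∀ᶠ n in atTop, Ioo (t - δ) (t + δ) ⊆ (πn n).I := by
  obtain ⟨ε, hε, hball⟩ := Metric.mem_nhds_iff.1 (mem_interior_iff_mem_nhds.1 ht)
  rw [Real.ball_eq_Ioo] at hball
  have happrox : ∀ s ∈ Ioo (t - ε) (t + ε), ∃ u : ℕ → ℝ,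
      (∀ᶠ n in atTop, u n ∈ (πn n).I) ∧ Tendsto u atTop (𝓝 s) := fun s hs => by
    obtain ⟨q, hq, hqs⟩ := h.exists_tendsto_of_mem_fgraph (p := (π.l s, s))
      ⟨hball hs, left_mem_uIcc⟩
    exact ⟨fun n => (q n).2, hq.mono fun n hn => hn.1, hqs.snd_nhds⟩
  obtain ⟨a, ha, hat⟩ := happrox (t - ε / 2) ⟨by linarith, by linarith⟩
  obtain ⟨b, hb, hbt⟩ := happrox (t + ε / 2) ⟨by linarith, by linarith⟩
  refine ⟨ε / 4, by positivity, ?_⟩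
  filter_upwards [ha, hb, hat.eventually (eventually_lt_nhds (by linarith : t - ε / 2 < t - ε / 4)),
    hbt.eventually (eventually_gt_nhds (by linarith : t + ε / 4 < t + ε / 2))]
    with n han hbn hal hbr
  exact Ioo_subset_Icc_self.trans ((Icc_subset_Icc hal.le hbr.le).trans ((hconn n).out han hbn))

lemma exists_tendsto_Lbar (h : FGraphConv πn π) {x : EReal × ℝ} (hx : x ∈ Lbar π) :
    ∃ g : ℕ → EReal × ℝ, (∀ᶠ n in atTop, g n ∈ Lbar (πn n)) ∧ Tendsto g atTop (𝓝 x) := by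
  obtain ⟨q, hq, hqx⟩ := h.exists_tendsto_of_mem_fgraph (p := (max (π.l x.2) (π.r x.2), x.2))
    ⟨hx.1, min_le_max, le_rfl⟩
  refine ⟨fun n => (min x.1 (q n).1, (q n).2),
    hq.mono fun n hn => ⟨hn.1, (min_le_right _ _).trans hn.2.2⟩, ?_⟩
  have h₁ := (tendsto_const_nhds (x := x.1)).min hqx.fst_nhds
  rw [min_eq_left hx.2] at h₁
  exact h₁.prodMk_nhds hqx.snd_nhds

lemma mem_Lbar_of_tendsto (h : FGraphConv πn π) {y : ℕ → EReal × ℝ} (hy : ∀ n, y n ∈ Lbar (πn n))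
    {x : EReal × ℝ} (hyx : Tendsto y atTop (𝓝 x)) : x ∈ Lbar π := by
  obtain ⟨z, ψ, hψ, hz, hlim⟩ := h.exists_subseq_tendsto_mem_fgraph
    (q := fun n => (max ((πn n).l (y n).2) ((πn n).r (y n).2), (y n).2))
    (.of_forall fun n => ⟨(hy n).1, min_le_max, le_rfl⟩) hyx.snd_nhds
  have hle : x.1 ≤ z := le_of_tendsto_of_tendsto (hyx.comp hψ.tendsto_atTop).fst_nhds hlim
    (.of_forall fun k => (hy (ψ k)).2)
  exact ⟨hz.1, hle.trans hz.2.2⟩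

lemma exists_tendsto_Lc (h : FGraphConv πn π) {x : EReal × ℝ} (hx : x ∈ Lc π) :
    ∃ g : ℕ → EReal × ℝ, (∀ᶠ n in atTop, g n ∈ Lc (πn n)) ∧ Tendsto g atTop (𝓝 x) := by
  by_cases ht : x.2 ∈ interior π.I
  · have hmin : min (π.l x.2) (π.r x.2) ≤ x.1 := not_lt.1 fun hlt => hx ⟨ht, hlt⟩
    obtain ⟨q, hq, hqx⟩ := h.exists_tendsto_of_mem_fgraph
      (p := (min (π.l x.2) (π.r x.2), x.2)) ⟨interior_subset ht, le_rfl, min_le_max⟩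
    refine ⟨fun n => (max x.1 (q n).1, (q n).2),
      hq.mono fun n hn hLo => (hn.2.1.trans (le_max_right _ _)).not_gt hLo.2, ?_⟩
    have h₁ := (tendsto_const_nhds (x := x.1)).max hqx.fst_nhds
    rw [max_eq_left hmin] at h₁
    exact h₁.prodMk_nhds hqx.snd_nhds
  · have hclos : x.2 ∈ closure (π.I)ᶜ := closure_compl (s := π.I) ▸ ht
    obtain ⟨s, hs, hsx⟩ := exists_tendsto_of_forall_eventually_exists_dist_lt
      (B := fun n => ((πn n).I)ᶜ) (x := x.2) fun δ hδ => by
        obtain ⟨s, hs, hds⟩ := Metric.mem_closure_iff.1 hclos δ hδ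
        exact (h.eventually_notMem_I hs).mono fun n hn => ⟨s, hn, hds⟩
    exact ⟨fun n => (x.1, s n), hs.mono fun n hn hLo => hn (interior_subset hLo.1),
      tendsto_const_nhds.prodMk_nhds hsx⟩

lemma mem_Lc_of_tendsto (h : FGraphConv πn π) (hconn : ∀ n, IsConn (πn n))
    {y : ℕ → EReal × ℝ} (hy : ∀ n, y n ∈ Lc (πn n)) {x : EReal × ℝ}
    (hyx : Tendsto y atTop (𝓝 x)) : x ∈ Lc π := by
  rintro ⟨ht, hlt⟩
  have hy₂ := hyx.snd_nhds
  obtain ⟨δ, hδ, hsub⟩ := h.exists_eventually_Ioo_subset hconn ht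
  have hint : ∀ᶠ n in atTop, (y n).2 ∈ interior (πn n).I := by
    filter_upwards [hsub, hy₂.eventually (Ioo_mem_nhds (by linarith : x.2 - δ < x.2)
      (by linarith : x.2 < x.2 + δ))] with n hn hyn
    exact interior_maximal hn isOpen_Ioo hyn
  obtain ⟨z, ψ, hψ, hz, hlim⟩ := h.exists_subseq_tendsto_mem_fgraph
    (q := fun n => (min ((πn n).l (y n).2) ((πn n).r (y n).2), (y n).2))
    (hint.mono fun n hn => ⟨interior_subset hn, le_rfl, min_le_max⟩) hy₂
  have hle : z ≤ x.1 := le_of_tendsto_of_tendsto hlim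
    (hyx.comp hψ.tendsto_atTop).fst_nhds
    (hψ.tendsto_atTop.eventually (hint.mono fun n hn => not_lt.1 fun h' => hy n ⟨hn, h'⟩))
  exact (hz.2.1.trans hle).not_gt hlt

end FGraphConv

theorem areas_left_of_a_path_general
    (πn : ℕ → PathSp) (π : PathSp)
    (hn : ∀ n, IsConn (πn n))
    (hconv : M1Conv πn π) :
    LHConv (fun n => Lbar (πn n)) (Lbar π) ∧ LHConv (fun n => Lc (πn n)) (Lc π) := by
  have hG := FGraphConv.of_M1Conv hconv
  constructor
  · exact lhConv_of_tendsto (fun _ hx => hG.exists_tendsto_Lbar hx) fun φ hφ y hy x hyx =>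
      (hG.comp hφ.tendsto_atTop).mem_Lbar_of_tendsto hy hyx
  · exact lhConv_of_tendsto (fun _ hx => hG.exists_tendsto_Lc hx) fun φ hφ y hy x hyx =>
      (hG.comp hφ.tendsto_atTop).mem_Lc_of_tendsto (fun k => hn (φ k)) hy hyx

/-- **Lemma (Areas left of a path).**
If `π_n ∈ Π^|` converge to `π ∈ Π^|` in the M1 topology, then `L̄(π_n) → L̄(π)` and
`L^c(π_n) → L^c(π)` in the local Hausdorff topology on `Cl(S)`, `S = ℝ̄ × ℝ`. -/
theorem areas_left_of_a_path
    (πn : ℕ → PathSp) (π : PathSp)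
    (hn : ∀ n, IsConn (πn n)) (h : IsConn π)
    (hconv : M1Conv πn π) :
    LHConv (fun n => Lbar (πn n)) (Lbar π) ∧ LHConv (fun n => Lc (πn n)) (Lc π) :=
  areas_left_of_a_path_general πn π hn hconv

end PathsPaper
end
end
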